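/- Demer's infinitude theorem: let A be a poset containing two incomparable elements a and b. Define G₀ = [a] and G_{n+1} = ⟨[a],[b] | G_n⟩. Then the sequence (G_n) is strictly increasing: G_n ≤ G_{n+1} and ¬(G_{n+1} ≤ G_n) for all n ≥ 0, and every G_n is passable. In particular, there are infinitely many pairwise non-equivalent passable games over A. -/
import Mathlib


inductive Game (A : Type) : Type 1 where
  | atom : A → Game A
  | comp : (ι κ : Type) → (ι → Game A) → (κ → Game A) → Nonempty ι → Nonempty κ → Game A

namespace Game

variable {A : Type}

/-- `G.IsAtom` holds iff `G` is an atomic game. -/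
def IsAtom : Game A → Prop
  | atom _ => True
  | comp _ _ _ _ _ _ => False

/-- `G.IsLeftOption x`: `x` is a left option of `G`. -/
def IsLeftOption : Game A → Game A → Prop
  | atom _, _ => False
  | comp _ _ L _ _ _, x => ∃ i, L i = x

/-- `G.IsRightOption y`: `y` is a right option of `G`. -/
def IsRightOption : Game A → Game A → Prop
  | atom _, _ => False
  | comp _ _ _ R _ _, x => ∃ j, R j = x

section Ord

variable [PartialOrder A]

mutual
  /-- The order relation `G ≤ H` on games over a poset. -/
  inductive Le : Game A → Game A → Prop
    | mk : ∀ {G H : Game A},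
        (∀ x, G.IsLeftOption x → Tri x H) →
        (∀ y, H.IsRightOption y → Tri G y) →
        ((G.IsAtom ∨ H.IsAtom) → Tri G H) →
        Le G H
  /-- The relation `G ◁ H` on games over a poset. -/
  inductive Tri : Game A → Game A → Prop
    | ofRight : ∀ {G H y : Game A}, G.IsRightOption y → Le y H → Tri G H
    | ofLeft : ∀ {G H x : Game A}, H.IsLeftOption x → Le G x → Tri G H
    | ofAtom : ∀ {a b : A}, a ≤ b → Tri (Game.atom a) (Game.atom b)
end

/-- Equivalence of games: `G ≤ H` and `H ≤ G`. -/
def Equiv (G H : Game A) : Prop := Le G H ∧ Le H G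

/-- A game is monotone if all of its options are good, and recursively all
options are monotone. -/
inductive Monotone : Game A → Prop
  | mk : ∀ {G : Game A},
      (∀ x, G.IsLeftOption x → Le G x) →
      (∀ y, G.IsRightOption y → Le y G) →
      (∀ x, G.IsLeftOption x → Monotone x) →
      (∀ y, G.IsRightOption y → Monotone y) →
      Monotone G

/-- A game is passable if `G ◁ G` and recursively all options are passable. -/
inductive Passable : Game A → Prop
  | mk : ∀ {G : Game A}, Tri G G →
      (∀ x, G.IsLeftOption x → Passable x) →
      (∀ y, G.IsRightOption y → Passable y) →
      Passable G

end Ord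

end Game

/-- Demer's sequence: `G₀ = [a]`, `G_{n+1} = ⟨[a],[b] | G_n⟩`. -/
def Game.demer {A : Type} (a b : A) : ℕ → Game A
  | 0 => Game.atom a
  | n + 1 =>
      Game.comp Bool Unit (fun c => cond c (Game.atom a) (Game.atom b))
        (fun _ => Game.demer a b n) ⟨true⟩ ⟨()⟩

namespace Game

section Aux

variable {A : Type} [PartialOrder A]

lemma tri_atom_le {x y : A} (h : Tri (atom x) (atom y)) : x ≤ y := by
  cases h with
  | ofRight hy _ => exact hy.elim
  | ofLeft hx _ => exact hx.elim
  | ofAtom h => exact h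

lemma le_atom_atom {x y : A} (h : Le (atom x) (atom y)) : x ≤ y := by
  cases h with
  | mk _ _ h3 => exact tri_atom_le (h3 (Or.inl trivial))

lemma le_atom_refl (x : A) : Le (atom x) (atom x) :=
  Le.mk (fun _ h => h.elim) (fun _ h => h.elim) (fun _ => Tri.ofAtom le_rfl)

lemma passable_atom (x : A) : Passable (atom x) :=
  Passable.mk (Tri.ofAtom le_rfl) (fun _ h => h.elim) (fun _ h => h.elim)

lemma demer_succ_leftOption {a b : A} {n : ℕ} {x : Game A}
    (h : IsLeftOption (demer a b (n + 1)) x) : x = atom a ∨ x = atom b := by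
  obtain ⟨i, hi⟩ := h
  cases i with
  | false => exact Or.inr hi.symm
  | true => exact Or.inl hi.symm

lemma demer_succ_rightOption {a b : A} {n : ℕ} {y : Game A}
    (h : IsRightOption (demer a b (n + 1)) y) : y = demer a b n := by
  obtain ⟨j, hj⟩ := h
  exact hj.symm

lemma leftOption_a {a b : A} {n : ℕ} :
    IsLeftOption (demer a b (n + 1)) (atom a) := ⟨true, rfl⟩

lemma leftOption_b {a b : A} {n : ℕ} :
    IsLeftOption (demer a b (n + 1)) (atom b) := ⟨false, rfl⟩

lemma rightOption_demer {a b : A} {n : ℕ} :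
    IsRightOption (demer a b (n + 1)) (demer a b n) := ⟨(), rfl⟩

lemma le_comp_atom {a b : A} {n : ℕ} {x : A}
    (h : Le (demer a b (n + 1)) (atom x)) : a ≤ x ∧ b ≤ x := by
  cases h with
  | mk h1 _ _ =>
    exact ⟨tri_atom_le (h1 (atom a) leftOption_a),
      tri_atom_le (h1 (atom b) leftOption_b)⟩

lemma demer_le_succ_tri (a b : A) (n : ℕ) :
    Le (demer a b n) (demer a b (n + 1)) ∧ Tri (demer a b n) (demer a b n) := by
  induction n with
  | zero =>
    have htri : Tri (demer a b 0) (demer a b 0) := Tri.ofAtom le_rfl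
    refine ⟨Le.mk (fun x hx => hx.elim) (fun y hy => ?_)
      (fun _ => Tri.ofLeft leftOption_a (le_atom_refl a)), htri⟩
    rw [demer_succ_rightOption hy]
    exact htri
  | succ n ih =>
    obtain ⟨ihle, _⟩ := ih
    have htri : Tri (demer a b (n + 1)) (demer a b (n + 1)) :=
      Tri.ofRight rightOption_demer ihle
    refine ⟨Le.mk (fun x hx => ?_) (fun y hy => ?_) (fun h => h.elim (fun h' => False.elim h') (fun h' => False.elim h')), htri⟩
    · rcases demer_succ_leftOption hx with rfl | rfl
      · exact Tri.ofLeft leftOption_a (le_atom_refl a)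
      · exact Tri.ofLeft leftOption_b (le_atom_refl b)
    · rw [demer_succ_rightOption hy]
      exact htri

lemma demer_passable (a b : A) (n : ℕ) : Passable (demer a b n) := by
  induction n with
  | zero => exact passable_atom a
  | succ n ih =>
    refine Passable.mk (demer_le_succ_tri a b (n + 1)).2 (fun x hx => ?_) (fun y hy => ?_)
    · rcases demer_succ_leftOption hx with rfl | rfl
      · exact passable_atom a
      · exact passable_atom b
    · rw [demer_succ_rightOption hy]; exact ih

lemma tri_step {a b : A} (hab : ¬ a ≤ b) (hba : ¬ b ≤ a) {k m : ℕ}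
    (h : Tri (demer a b (k + 1)) (demer a b m)) : Le (demer a b k) (demer a b m) := by
  simp only [demer] at h
  cases h with
  | ofRight hy hle =>
    have := demer_succ_rightOption (a := a) (b := b) (n := k) hy
    exact this ▸ hle
  | ofLeft hx hle =>
    cases m with
    | zero => exact hx.elim
    | succ m' =>
      rcases demer_succ_leftOption hx with rfl | rfl
      · exact absurd (le_comp_atom hle).2 hba
      · exact absurd (le_comp_atom hle).1 hab

lemma not_demer_le {a b : A} (hab : ¬ a ≤ b) (hba : ¬ b ≤ a) :
    ∀ m k : ℕ, ¬ Le (demer a b (k + m + 1)) (demer a b m) := by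
  intro m
  induction m with
  | zero => exact fun k h => hba (le_comp_atom h).2
  | succ m ih =>
    intro k h
    cases h with
    | mk _ h2 _ =>
      exact ih k (tri_step hab hba (h2 (demer a b m) rightOption_demer))

end Aux

end Game

/-- Demer's infinitude theorem: if `a` and `b` are incomparable, then the
sequence `G_n` is strictly increasing, every `G_n` is passable, and the `G_n`
are pairwise non-equivalent; in particular there are infinitely many
pairwise non-equivalent passable games over `A`. -/
theorem Game.demer_strictMono {A : Type} [PartialOrder A]
    (a b : A) (hab : ¬ a ≤ b) (hba : ¬ b ≤ a) :
    (∀ n : ℕ, Game.Le (Game.demer a b n) (Game.demer a b (n + 1)) ∧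
        ¬ Game.Le (Game.demer a b (n + 1)) (Game.demer a b n) ∧
        (Game.demer a b n).Passable) ∧
    (∀ m n : ℕ, m ≠ n → ¬ Game.Equiv (Game.demer a b m) (Game.demer a b n)) := by
  constructor
  · intro n
    refine ⟨(demer_le_succ_tri a b n).1, ?_, demer_passable a b n⟩
    have h := not_demer_le hab hba n 0
    rwa [Nat.zero_add] at h
  · intro m n hmn ⟨h1, h2⟩
    rcases lt_trichotomy m n with hlt | heq | hlt
    · have e : n - m - 1 + m + 1 = n := by omega
      rw [← e] at h2
      exact not_demer_le hab hba m (n - m - 1) h2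
    · exact hmn heq
    · have e : m - n - 1 + n + 1 = m := by omega
      rw [← e] at h1
      exact not_demer_le hab hba n (m - n - 1) h1
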